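/- Let E ⊆ ℝ² be a bounded set, let K ≥ 1 and t > 0, and for s > 0 set θ(s) := 1/(1+s). Put d := dim_{A,reg}^{θ(t/K)}(E). If θ(t) < 1/K² and θ(t) ≤ d/2, then d/(1 + ((K−1)/2)·d) ≤ ((1 − θ(t)/K²)/(1 − θ(t)))·dim_{A,reg}^{θ(t)/K²}(E). -/
import Mathlib


open Set Metric
open scoped ENNReal

noncomputable section

/-- Covering number: the smallest number of sets of diameter at most `r` needed to
cover `F` (`∞` if no finite such cover exists). -/
def coverN {X : Type*} [PseudoMetricSpace X] (F : Set X) (r : ℝ) : ℝ≥0∞ :=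
  sInf {m : ℝ≥0∞ | ∃ 𝒰 : Finset (Set X), (𝒰.card : ℝ≥0∞) = m ∧
    (∀ U ∈ 𝒰, EMetric.diam U ≤ ENNReal.ofReal r) ∧ F ⊆ ⋃ U ∈ 𝒰, U}

/-- Regularized Assouad spectrum `dim_{A,reg}^θ(F)`. -/
def dimAreg {X : Type*} [PseudoMetricSpace X] (θ : ℝ) (F : Set X) : ℝ :=
  sInf {α : ℝ | 0 < α ∧ ∃ C : ℝ, 0 < C ∧ ∀ x ∈ F, ∀ r R : ℝ,
    0 < r → r ≤ R ^ (1/θ) → R ^ (1/θ) < R → R < 1 →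
    coverN (closedBall x R ∩ F) r ≤ ENNReal.ofReal (C * (R/r) ^ α)}

/-- (Unregularized) Assouad spectrum `dim_A^θ(F)`. -/
def dimAspec {X : Type*} [PseudoMetricSpace X] (θ : ℝ) (F : Set X) : ℝ :=
  sInf {α : ℝ | 0 < α ∧ ∃ C : ℝ, 0 < C ∧ ∀ x ∈ F, ∀ R : ℝ, 0 < R → R < 1 →
    coverN (closedBall x R ∩ F) (R ^ (1/θ)) ≤ ENNReal.ofReal (C * (R / R ^ (1/θ)) ^ α)}

/-- Upper box-counting dimension of a (bounded) set. -/
def dimBupper {X : Type*} [PseudoMetricSpace X] (F : Set X) : ℝ :=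
  sInf {α : ℝ | 0 < α ∧ ∃ C : ℝ, 0 < C ∧ ∀ r : ℝ, 0 < r → r ≤ diam F →
    coverN F r ≤ ENNReal.ofReal (C * r ^ (-α))}

/-- Assouad dimension. -/
def dimA {X : Type*} [PseudoMetricSpace X] (F : Set X) : ℝ :=
  sInf {α : ℝ | 0 < α ∧ ∃ C : ℝ, 0 < C ∧ ∀ x ∈ F, ∀ r R : ℝ, 0 < r → r ≤ R →
    coverN (closedBall x R ∩ F) r ≤ ENNReal.ofReal (C * (R/r) ^ α)}

/-- Quasi-Assouad dimension: `sup_{0<θ<1} dim_{A,reg}^θ(F)`. -/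
def dimqA {X : Type*} [PseudoMetricSpace X] (F : Set X) : ℝ :=
  sSup ((fun θ => dimAreg θ F) '' Ioo (0:ℝ) 1)

open Classical in
/-- Phase-transition parameter `ρ(F)`. -/
def rhoPT {X : Type*} [PseudoMetricSpace X] (F : Set X) : ℝ :=
  if ∃ θ ∈ Ioo (0:ℝ) 1, dimAreg θ F = dimqA F
  then sInf {θ | θ ∈ Ioo (0:ℝ) 1 ∧ dimAreg θ F = dimqA F}
  else 1

/-- The axes-parallel cube `Q(x,R) = ∏ [xᵢ - R, xᵢ + R]`. -/
def cubeQ {n : ℕ} (x : EuclideanSpace ℝ (Fin n)) (R : ℝ) : Set (EuclideanSpace ℝ (Fin n)) :=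
  {y | ∀ i, x i - R ≤ y i ∧ y i ≤ x i + R}

/-- The generation-`m` dyadic subcube of `Q(x,R)` with index `k`. -/
def dyadicCube {n : ℕ} (x : EuclideanSpace ℝ (Fin n)) (R : ℝ) (m : ℕ)
    (k : Fin n → Fin (2 ^ m)) : Set (EuclideanSpace ℝ (Fin n)) :=
  {y | ∀ i, x i - R + (k i : ℝ) * (2 * R / 2 ^ m) ≤ y i ∧
        y i ≤ x i - R + ((k i : ℝ) + 1) * (2 * R / 2 ^ m)}

/-- `N_d(B(x,R) ∩ F, m)`: the number of generation-`m` dyadic subcubes of `Q(x,R)`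
that intersect `B(x,R) ∩ F`. -/
def Nd {n : ℕ} (x : EuclideanSpace ℝ (Fin n)) (R : ℝ)
    (F : Set (EuclideanSpace ℝ (Fin n))) (m : ℕ) : ℕ :=
  Nat.card {k : Fin n → Fin (2 ^ m) // (dyadicCube x R m k ∩ (closedBall x R ∩ F)).Nonempty}

/-- `f` is `η`-quasisymmetric on the set `S`. -/
def QSOn {X Y : Type*} [PseudoMetricSpace X] [PseudoMetricSpace Y]
    (η : ℝ → ℝ) (f : X → Y) (S : Set X) : Prop :=
  ∀ x ∈ S, ∀ y ∈ S, ∀ z ∈ S, x ≠ z →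
    dist (f x) (f y) ≤ η (dist x y / dist x z) * dist (f x) (f z)

/-- Distance between two sets. -/
def setDist {X : Type*} [PseudoMetricSpace X] (A B : Set X) : ℝ :=
  sInf {d : ℝ | ∃ a ∈ A, ∃ b ∈ B, d = dist a b}

end

section AuxLemmas

noncomputable section

def Sreg {X : Type*} [PseudoMetricSpace X] (θ : ℝ) (F : Set X) : Set ℝ :=
  {α : ℝ | 0 < α ∧ ∃ C : ℝ, 0 < C ∧ ∀ x ∈ F, ∀ r R : ℝ,
    0 < r → r ≤ R ^ (1/θ) → R ^ (1/θ) < R → R < 1 →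
    coverN (closedBall x R ∩ F) r ≤ ENNReal.ofReal (C * (R/r) ^ α)}

lemma dimAreg_eq {X : Type*} [PseudoMetricSpace X] (θ : ℝ) (F : Set X) :
    dimAreg θ F = sInf (Sreg θ F) := rfl

lemma coverN_mono {X : Type*} [PseudoMetricSpace X] {F G : Set X} (h : F ⊆ G) (r : ℝ) :
    coverN F r ≤ coverN G r := by
  apply sInf_le_sInf
  rintro m ⟨𝒰, hc, hd, hcov⟩
  exact ⟨𝒰, hc, hd, h.trans hcov⟩

lemma Sreg_anti {X : Type*} [PseudoMetricSpace X] {θ1 θ2 : ℝ} (F : Set X)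
    (h0 : 0 < θ1) (h12 : θ1 ≤ θ2) (h21 : θ2 < 1) : Sreg θ2 F ⊆ Sreg θ1 F := by
  rintro α ⟨hα, C, hC, h⟩
  refine ⟨hα, C, hC, fun x hx r R hr hrR hRR hR1 => ?_⟩
  have hθ2 : 0 < θ2 := lt_of_lt_of_le h0 h12
  have hRpos : 0 < R := lt_trans (lt_of_lt_of_le hr hrR) hRR
  have hle : R ^ (1/θ1) ≤ R ^ (1/θ2) :=
    Real.rpow_le_rpow_of_exponent_ge hRpos hR1.le (one_div_le_one_div_of_le h0 h12)
  exact h x hx r R hr (hrR.trans hle)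
    (by have h' := Real.rpow_lt_rpow_of_exponent_gt hRpos hR1 ((one_lt_div hθ2).2 h21)
        rwa [Real.rpow_one] at h') hR1

lemma Sreg_scale {X : Type*} [PseudoMetricSpace X] {θ1 θ2 α : ℝ} (F : Set X)
    (h0 : 0 < θ1) (h12 : θ1 ≤ θ2) (h21 : θ2 < 1) (hα : α ∈ Sreg θ1 F) :
    ((1 - θ1) / (1 - θ2)) * α ∈ Sreg θ2 F := by
  obtain ⟨hαpos, C, hC, h⟩ := hα
  have hθ2 : 0 < θ2 := lt_of_lt_of_le h0 h12
  have h11 : θ1 < 1 := lt_of_le_of_lt h12 h21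
  have h2pos : (0:ℝ) < 1 - θ2 := by linarith
  have hc1 : (1:ℝ) ≤ (1 - θ1) / (1 - θ2) := (one_le_div h2pos).2 (by linarith)
  have hcα : 0 < ((1 - θ1) / (1 - θ2)) * α := mul_pos (lt_of_lt_of_le one_pos hc1) hαpos
  refine ⟨hcα, C, hC, fun x hx r R hr hrR hRR hR1 => ?_⟩
  have hRpos : 0 < R := lt_trans (lt_of_lt_of_le hr hrR) hRR
  have hrRlt : r < R := lt_of_le_of_lt hrR hRR
  have hr1 : r < 1 := hrRlt.trans hR1
  have hrθ2R : r ^ θ2 ≤ R := by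
    have h' := Real.rpow_le_rpow hr.le hrR hθ2.le
    rwa [← Real.rpow_mul hRpos.le, one_div_mul_cancel hθ2.ne', Real.rpow_one] at h'
  have hbase : r ^ (θ2 - 1) ≤ R / r := by
    rw [Real.rpow_sub hr, Real.rpow_one]
    gcongr
  by_cases hcase : r ≤ R ^ (1/θ1)
  · have hlt1 : R ^ (1/θ1) < R := by
      have h' := Real.rpow_lt_rpow_of_exponent_gt hRpos hR1 ((one_lt_div h0).2 h11)
      rwa [Real.rpow_one] at h'
    refine (h x hx r R hr hcase hlt1 hR1).trans (ENNReal.ofReal_le_ofReal ?_)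
    refine mul_le_mul_of_nonneg_left ?_ hC.le
    apply Real.rpow_le_rpow_of_exponent_le
    · rw [le_div_iff₀ hr]; linarith
    · exact le_mul_of_one_le_left hαpos.le hc1
  · push_neg at hcase
    have hR'1 : r ^ θ1 < 1 := Real.rpow_lt_one hr.le hr1 h0
    have hRR'lt : R < r ^ θ1 := by
      have h' := Real.rpow_lt_rpow (Real.rpow_nonneg hRpos.le _) hcase h0
      rwa [← Real.rpow_mul hRpos.le, one_div_mul_cancel h0.ne', Real.rpow_one] at h'
    have hR'θ : (r ^ θ1) ^ (1/θ1) = r := by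
      rw [← Real.rpow_mul hr.le, mul_one_div, div_self h0.ne', Real.rpow_one]
    have hlt : (r ^ θ1) ^ (1/θ1) < r ^ θ1 := by
      rw [hR'θ]
      have h' : r ^ (1:ℝ) < r ^ θ1 := Real.rpow_lt_rpow_of_exponent_gt hr hr1 h11
      rwa [Real.rpow_one] at h'
    have hbound := h x hx r (r ^ θ1) hr (le_of_eq hR'θ.symm) hlt hR'1
    refine le_trans (coverN_mono (inter_subset_inter_left F
      (closedBall_subset_closedBall hRR'lt.le)) r) (hbound.trans (ENNReal.ofReal_le_ofReal ?_))
    refine mul_le_mul_of_nonneg_left ?_ hC.le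
    calc (r ^ θ1 / r) ^ α = (r ^ (θ1 - 1)) ^ α := by
          rw [Real.rpow_sub hr, Real.rpow_one]
      _ = r ^ ((θ1 - 1) * α) := (Real.rpow_mul hr.le _ _).symm
      _ = (r ^ (θ2 - 1)) ^ ((1 - θ1) / (1 - θ2) * α) := by
          rw [← Real.rpow_mul hr.le]
          congr 1
          field_simp
          ring
      _ ≤ (R / r) ^ ((1 - θ1) / (1 - θ2) * α) :=
          Real.rpow_le_rpow (Real.rpow_nonneg hr.le _) hbase hcα.le

end

end AuxLemmas

/-- comparison of the quasiconformal Assouad spectrum bound with the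
bi-Hölder bound (Proposition 4.3 of the paper), with `θ(s) = 1/(1+s)`. -/
theorem stmt13 (E : Set (EuclideanSpace ℝ (Fin 2))) (hE : Bornology.IsBounded E)
    (K t : ℝ) (hK : 1 ≤ K) (ht : 0 < t)
    (h1 : 1 / (1 + t) < 1 / K ^ 2)
    (h2 : 1 / (1 + t) ≤ dimAreg (1 / (1 + t / K)) E / 2) :
    dimAreg (1 / (1 + t / K)) E / (1 + ((K - 1) / 2) * dimAreg (1 / (1 + t / K)) E)
      ≤ ((1 - (1 / (1 + t)) / K ^ 2) / (1 - 1 / (1 + t)))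
          * dimAreg ((1 / (1 + t)) / K ^ 2) E := by
  have hK0 : (0:ℝ) < K := lt_of_lt_of_le one_pos hK
  have ht1 : (0:ℝ) < 1 + t := by linarith
  have htK : (0:ℝ) < 1 + t / K := by positivity
  set θ : ℝ := 1 / (1 + t) with hθdef
  set θ1 : ℝ := θ / K ^ 2 with hθ1def
  set θ2 : ℝ := 1 / (1 + t / K) with hθ2def
  have hθpos : 0 < θ := by rw [hθdef]; positivity
  have hθ1pos : 0 < θ1 := by rw [hθ1def]; positivity
  have hθ2pos : 0 < θ2 := by rw [hθ2def]; positivity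
  have hθ2lt1 : θ2 < 1 := by
    rw [hθ2def, div_lt_one htK]
    have : 0 < t / K := div_pos ht hK0
    linarith
  have hθ12 : θ1 ≤ θ2 := by
    rw [hθ1def, hθ2def, hθdef, div_div]
    apply one_div_le_one_div_of_le htK
    have h1K : (1:ℝ) ≤ K ^ 2 := by nlinarith
    have h2K : t / K ≤ t := div_le_self ht.le hK
    nlinarith [mul_nonneg ht1.le (by linarith : (0:ℝ) ≤ K ^ 2 - 1)]
  have hθ1lt1 : θ1 < 1 := lt_of_le_of_lt hθ12 hθ2lt1
  set d := dimAreg θ2 E with hd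
  set D := dimAreg θ1 E with hD
  have hd2 : 2 * θ ≤ d := by linarith
  have hdpos : 0 < d := lt_of_lt_of_le (by positivity) hd2
  have hS2ne : (Sreg θ2 E).Nonempty := by
    by_contra hne
    rw [Set.not_nonempty_iff_eq_empty] at hne
    rw [hd, dimAreg_eq, hne, Real.sInf_empty] at hdpos
    exact lt_irrefl 0 hdpos
  have hS1ne : (Sreg θ1 E).Nonempty := hS2ne.mono (Sreg_anti E hθ1pos hθ12 hθ2lt1)
  have hc2pos : (0:ℝ) < 1 - θ2 := by linarith
  have hc1pos : (0:ℝ) < 1 - θ1 := by linarith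
  have hcpos : (0:ℝ) < (1 - θ1) / (1 - θ2) := div_pos hc1pos hc2pos
  have key : d / ((1 - θ1) / (1 - θ2)) ≤ D := by
    rw [hD, dimAreg_eq]
    refine le_csInf hS1ne fun α hα => ?_
    have hmem := Sreg_scale E hθ1pos hθ12 hθ2lt1 hα
    have hdle : d ≤ (1 - θ1) / (1 - θ2) * α := by
      rw [hd, dimAreg_eq]
      exact csInf_le ⟨0, fun y hy => hy.1.le⟩ hmem
    rw [div_le_iff₀ hcpos]
    linarith [mul_comm α ((1 - θ1) / (1 - θ2))]
  have key2 : d * (1 - θ2) ≤ D * (1 - θ1) := by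
    rw [div_div_eq_mul_div, div_le_iff₀ hc1pos] at key
    exact key
  have hθ'pos : (0:ℝ) < 1 - θ := by
    rw [hθdef]
    have : 1 / (1 + t) < 1 := by rw [div_lt_one ht1]; linarith
    linarith
  have hKθ : (0:ℝ) < 1 + (K - 1) * θ := by nlinarith
  have hA : 1 + (K - 1) * θ ≤ 1 + (K - 1) / 2 * d := by
    have h' : (K - 1) / 2 * (2 * θ) ≤ (K - 1) / 2 * d :=
      mul_le_mul_of_nonneg_left hd2 (by linarith)
    nlinarith
  have hid : (1 - θ2) * (1 + (K - 1) * θ) = 1 - θ := by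
    rw [hθdef, hθ2def]
    field_simp
    ring
  calc d / (1 + (K - 1) / 2 * d)
      ≤ d / (1 + (K - 1) * θ) := by gcongr
    _ = d * (1 - θ2) / (1 - θ) := by
        rw [div_eq_div_iff hKθ.ne' hθ'pos.ne', ← hid]
        ring
    _ ≤ D * (1 - θ1) / (1 - θ) := by gcongr
    _ = (1 - θ1) / (1 - θ) * D := by ring
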